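/- arXiv:2205.04000 — 3 statements merged into one kernel-verified Lean document; each statement's English description precedes it below -/
import Mathlib

section
/- Let R be a commutative noetherian ring, S a left noetherian ring which is an R-algebra, and M a nonzero S-module that is finitely generated as an S-module. Then there is a finite chain of S-submodules 0 = M_0 ⊆ M_1 ⊆ … ⊆ M_p = M such that each successive quotient M_i/M_{i-1} is R-elementary; moreover, for any such chain, Ass(M) ⊆ ⋃_{i=1}^{p} Ass(M_i/M_{i-1}). -/
/-- Annihilator in `R` of an `S`-submodule, `R` acting through `algebraMap R S`. -/
def annRS (R : Type*) {S M : Type*} [CommRing R] [Ring S] [Algebra R S]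
    [AddCommGroup M] [Module S M] (N : Submodule S M) : Ideal R where
  carrier := {r : R | ∀ x ∈ N, algebraMap R S r • x = 0}
  zero_mem' := by intro x _; simp
  add_mem' := by
    intro a b ha hb x hx
    rw [map_add, add_smul, ha x hx, hb x hx, add_zero]
  smul_mem' := by
    intro c a ha x hx
    rw [smul_eq_mul, map_mul, mul_smul, ha x hx, smul_zero]

/-- An `R`-elementary object: nonzero, finitely generated, and the `R`-annihilator of
every nonzero subobject equals a fixed prime ideal `p` of `R`. -/
def IsRElem (R : Type*) {S M : Type*} [CommRing R] [Ring S] [Algebra R S]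
    [AddCommGroup M] [Module S M] (L : Submodule S M) : Prop :=
  L ≠ ⊥ ∧ L.FG ∧ ∃ p : Ideal R, p.IsPrime ∧
    ∀ L' : Submodule S M, L' ≤ L → L' ≠ ⊥ → annRS R L' = p

/-- Associated primes of the subobject `N`. -/
def RAssOf (R : Type*) {S M : Type*} [CommRing R] [Ring S] [Algebra R S]
    [AddCommGroup M] [Module S M] (N : Submodule S M) : Set (Ideal R) :=
  {p | ∃ L : Submodule S M, L ≤ N ∧ IsRElem R L ∧ annRS R L = p}

/-!
Among the nonzero submodules of a nonzero `N` in a noetherian module, one with maximal `R`-annihilator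
is `R`-elementary: its annihilator `p` is shared by all its nonzero submodules, and `p` is prime
because if `b ∉ p` then `b • L` is a nonzero submodule, so `a b ∈ p` forces `a ∈ ann (b • L) = p`.
Lifting such submodules from quotients builds a filtration with elementary factors up to a
maximal term, which must be `M` by noetherianity.
Given any such filtration and an elementary `L ≤ M`, take the first index `i` with
`L ∩ M_{i+1} ≠ 0`; then `L ∩ M_{i+1}` embeds into `M_{i+1}/M_i`, and its image has annihilator
`ann L` as well as `ann (M_{i+1}/M_i)`.
-/

section AssociatedPrimes

variable {R S M : Type*} [CommRing R] [Ring S] [Algebra R S] [AddCommGroup M] [Module S M]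

theorem annRS_anti {N N' : Submodule S M} (h : N ≤ N') : annRS R N' ≤ annRS R N :=
  fun _ hr x hx => hr x (h hx)

theorem annRS_ne_top {N : Submodule S M} (hN : N ≠ ⊥) : annRS R N ≠ ⊤ := by
  intro htop
  obtain ⟨x, hxN, hx0⟩ := (Submodule.ne_bot_iff N).mp hN
  have h1 : algebraMap R S 1 • x = 0 := (htop ▸ Submodule.mem_top : (1 : R) ∈ annRS R N) x hxN
  rw [map_one, one_smul] at h1
  exact hx0 h1

theorem annRS_map_of_disjoint_ker {M' : Type*} [AddCommGroup M'] [Module S M']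
    (f : M →ₗ[S] M') {N : Submodule S M} (hf : Disjoint N (LinearMap.ker f)) :
    annRS R (N.map f) = annRS R N := by
  rw [LinearMap.disjoint_ker] at hf
  ext r
  constructor
  · intro hr x hx
    exact hf _ (N.smul_mem _ hx) (by rw [map_smul]; exact hr (f x) ⟨x, hx, rfl⟩)
  · rintro hr _ ⟨x, hx, rfl⟩
    rw [← map_smul, hr x hx, map_zero]

variable (S M) in
def algebraMapSMul (r : R) : M →ₗ[S] M where
  toFun x := algebraMap R S r • x
  map_add' x y := smul_add _ _ _
  map_smul' s x := by simp only [RingHom.id_apply, smul_smul, Algebra.commutes r s]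

theorem isPrime_annRS_of_forall_annRS_eq {L : Submodule S M} (hL : L ≠ ⊥)
    (hann : ∀ L' ≤ L, L' ≠ ⊥ → annRS R L' = annRS R L) : (annRS R L).IsPrime := by
  refine ⟨annRS_ne_top hL, fun {a b} hab => or_iff_not_imp_right.mpr fun hb => ?_⟩
  set bL := L.map (algebraMapSMul S M b)
  have hbL_le : bL ≤ L := by
    rintro _ ⟨x, hx, rfl⟩
    exact L.smul_mem _ hx
  have hbL_ne : bL ≠ ⊥ := by
    obtain ⟨x, hx, hbx⟩ : ∃ x ∈ L, algebraMap R S b • x ≠ 0 := by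
      simpa [annRS] using hb
    exact (Submodule.ne_bot_iff bL).mpr ⟨_, ⟨x, hx, rfl⟩, hbx⟩
  rw [← hann bL hbL_le hbL_ne]
  rintro _ ⟨x, hx, rfl⟩
  change algebraMap R S a • algebraMap R S b • x = 0
  rw [smul_smul, ← map_mul]
  exact hab x hx

theorem isRElem_of_forall_annRS_eq {L : Submodule S M} (hL : L ≠ ⊥) (hfg : L.FG)
    (hann : ∀ L' ≤ L, L' ≠ ⊥ → annRS R L' = annRS R L) : IsRElem R L :=
  ⟨hL, hfg, annRS R L, isPrime_annRS_of_forall_annRS_eq hL hann, hann⟩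

theorem IsRElem.annRS_eq {L L' : Submodule S M} (hL : IsRElem R L) (hle : L' ≤ L)
    (hne : L' ≠ ⊥) : annRS R L' = annRS R L := by
  obtain ⟨hL0, -, p, -, hp⟩ := hL
  rw [hp L' hle hne, hp L le_rfl hL0]

theorem exists_isRElem_le [IsNoetherianRing R] [IsNoetherian S M] {N : Submodule S M}
    (hN : N ≠ ⊥) : ∃ L ≤ N, IsRElem R L := by
  obtain ⟨_, ⟨L, ⟨hLN, hL0⟩, rfl⟩, hmax⟩ := set_has_maximal_iff_noetherian.mpr
    (inferInstanceAs (IsNoetherian R R))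
    (annRS R '' {L : Submodule S M | L ≤ N ∧ L ≠ ⊥}) ⟨_, ⟨N, ⟨le_rfl, hN⟩, rfl⟩⟩
  refine ⟨L, hLN, isRElem_of_forall_annRS_eq hL0 (IsNoetherian.noetherian L) ?_⟩
  intro L' hL'L hL'0
  by_contra hne
  exact hmax _ ⟨L', ⟨hL'L.trans hLN, hL'0⟩, rfl⟩ ((annRS_anti hL'L).lt_of_ne' hne)

theorem exists_le_isRElem_map_mkQ [IsNoetherianRing R] [IsNoetherian S M] {N : Submodule S M}
    (hN : N ≠ ⊤) : ∃ N', N ≤ N' ∧ IsRElem R (N'.map N.mkQ) := by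
  have : Nontrivial (M ⧸ N) := Submodule.Quotient.nontrivial_iff.mpr hN
  obtain ⟨L, -, hL⟩ := exists_isRElem_le (R := R) (top_ne_bot : (⊤ : Submodule S (M ⧸ N)) ≠ ⊥)
  refine ⟨L.comap N.mkQ, (Submodule.ker_mkQ N).symm.le.trans (LinearMap.ker_le_comap _), ?_⟩
  rwa [Submodule.map_comap_eq_of_surjective N.mkQ_surjective]

theorem exists_filtration_snoc {N N' : Submodule S M} (hNN' : N ≤ N')
    (hN' : IsRElem R (N'.map N.mkQ)) {p : ℕ} {c : ℕ → Submodule S M} (hc0 : c 0 = ⊥)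
    (hcp : c p = N) (hmono : ∀ i < p, c i ≤ c (i + 1))
    (helem : ∀ i < p, IsRElem R ((c (i + 1)).map (c i).mkQ)) :
    ∃ c' : ℕ → Submodule S M, c' 0 = ⊥ ∧ c' (p + 1) = N' ∧
      (∀ i < p + 1, c' i ≤ c' (i + 1)) ∧
      ∀ i < p + 1, IsRElem R ((c' (i + 1)).map (c' i).mkQ) := by
  classical
  set c' := Function.update c (p + 1) N'
  have hc' : ∀ i ≤ p, c' i = c i := fun i hi => Function.update_of_ne (by omega) _ _
  have hc'_succ : ∀ i < p + 1, i < p ∧ c' i = c i ∧ c' (i + 1) = c (i + 1) ∨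
      c' i = N ∧ c' (i + 1) = N' := by
    intro i hi
    rcases Nat.lt_succ_iff_lt_or_eq.mp hi with hi | rfl
    · exact .inl ⟨hi, hc' i hi.le, hc' (i + 1) hi⟩
    · exact .inr ⟨(hc' i le_rfl).trans hcp, Function.update_self ..⟩
  refine ⟨c', by rw [hc' 0 p.zero_le, hc0], Function.update_self .., fun i hi => ?_,
    fun i hi => ?_⟩
  · rcases hc'_succ i hi with ⟨hi, h, h'⟩ | ⟨h, h'⟩ <;> rw [h, h']
    exacts [hmono i hi, hNN']
  · rcases hc'_succ i hi with ⟨hi, h, h'⟩ | ⟨h, h'⟩ <;> rw [h, h']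
    exacts [helem i hi, hN']

theorem exists_isRElem_filtration [IsNoetherianRing R] [IsNoetherian S M] :
    ∃ (p : ℕ) (c : ℕ → Submodule S M), c 0 = ⊥ ∧ c p = ⊤ ∧
      (∀ i < p, c i ≤ c (i + 1)) ∧ ∀ i < p, IsRElem R ((c (i + 1)).map (c i).mkQ) := by
  obtain ⟨N, ⟨p, c, hc0, hcp, hmono, helem⟩, hmax⟩ := set_has_maximal_iff_noetherian.mpr
    (inferInstanceAs (IsNoetherian S M))
    {N | ∃ (p : ℕ) (c : ℕ → Submodule S M), c 0 = ⊥ ∧ c p = N ∧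
      (∀ i < p, c i ≤ c (i + 1)) ∧ ∀ i < p, IsRElem R ((c (i + 1)).map (c i).mkQ)}
    ⟨⊥, 0, fun _ => ⊥, rfl, rfl, by simp, by simp⟩
  refine ⟨p, c, hc0, ?_, hmono, helem⟩
  by_contra hNtop
  obtain ⟨N', hNN', hN'⟩ := exists_le_isRElem_map_mkQ (R := R) (hcp ▸ hNtop)
  have hlt : N < N' := hNN'.lt_of_ne fun h => hN'.1 (h ▸ Submodule.mkQ_map_self N)
  exact hmax N' ⟨p + 1, exists_filtration_snoc hNN' hN' hc0 hcp hmono helem⟩ hlt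

theorem Nat.exists_lt_not_and_succ_of_not_zero {P : ℕ → Prop} (h0 : ¬P 0) {p : ℕ} (hp : P p) :
    ∃ i < p, ¬P i ∧ P (i + 1) := by
  induction p with
  | zero => exact absurd hp h0
  | succ p ih =>
    by_cases hPp : P p
    · obtain ⟨i, hi, hPi⟩ := ih hPp
      exact ⟨i, hi.trans p.lt_succ_self, hPi⟩
    · exact ⟨p, p.lt_succ_self, hPp, hp⟩

theorem annRS_mem_rAssOf_map_mkQ {L N N' : Submodule S M} (hL : IsRElem R L)
    (hLN : L ⊓ N = ⊥) (hLN' : L ⊓ N' ≠ ⊥) (hN' : IsRElem R (N'.map N.mkQ)) :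
    annRS R L ∈ RAssOf R (N'.map N.mkQ) := by
  have hdisj : Disjoint (L ⊓ N') (LinearMap.ker N.mkQ) := by
    rw [Submodule.ker_mkQ, disjoint_iff, ← le_bot_iff, ← hLN]
    exact inf_le_inf_right N inf_le_left
  have hK_ne : (L ⊓ N').map N.mkQ ≠ ⊥ := fun h =>
    hLN' (hdisj.eq_bot_of_le (LinearMap.le_ker_iff_map.mpr h))
  refine ⟨_, le_rfl, hN', ?_⟩
  rw [← hN'.annRS_eq (Submodule.map_mono inf_le_right) hK_ne,
    annRS_map_of_disjoint_ker _ hdisj, hL.annRS_eq inf_le_left hLN']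

theorem rAssOf_top_subset_biUnion {p : ℕ} {c : ℕ → Submodule S M} (hc0 : c 0 = ⊥)
    (hcp : c p = ⊤) (helem : ∀ i < p, IsRElem R ((c (i + 1)).map (c i).mkQ)) :
    RAssOf R (⊤ : Submodule S M) ⊆ ⋃ i < p, RAssOf R ((c (i + 1)).map (c i).mkQ) := by
  rintro _ ⟨L, -, hL, rfl⟩
  obtain ⟨i, hi, hLi, hLi'⟩ := Nat.exists_lt_not_and_succ_of_not_zero (P := fun j => L ⊓ c j ≠ ⊥) (p := p)
    (by simp [hc0]) (by simpa [hcp] using hL.1)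
  exact Set.mem_biUnion hi (annRS_mem_rAssOf_map_mkQ hL (not_not.mp hLi) hLi' (helem i hi))

end AssociatedPrimes

theorem exists_elementary_filtration_and_rAss_subset_general
    (R S M : Type*) [CommRing R] [IsNoetherianRing R] [Ring S] [IsNoetherianRing S]
    [Algebra R S] [AddCommGroup M] [Module S M]
    (hfg : (⊤ : Submodule S M).FG) :
    (∃ (p : ℕ) (c : ℕ → Submodule S M), c 0 = ⊥ ∧ c p = ⊤ ∧
        (∀ i < p, c i ≤ c (i + 1)) ∧
        ∀ i < p, IsRElem R (Submodule.map (c i).mkQ (c (i + 1)))) ∧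
      ∀ (p : ℕ) (c : ℕ → Submodule S M), c 0 = ⊥ → c p = ⊤ →
        (∀ i < p, c i ≤ c (i + 1)) →
        (∀ i < p, IsRElem R (Submodule.map (c i).mkQ (c (i + 1)))) →
        RAssOf R (⊤ : Submodule S M) ⊆
          ⋃ i < p, RAssOf R (Submodule.map (c i).mkQ (c (i + 1))) := by
  have : Module.Finite S M := ⟨hfg⟩
  have : IsNoetherian S M := isNoetherian_of_isNoetherianRing_of_finite S M
  exact ⟨exists_isRElem_filtration,
    fun _ _ hc0 hcp _ helem => rAssOf_top_subset_biUnion hc0 hcp helem⟩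

/-- A nonzero finitely generated `S`-module `M` admits a finite chain of `S`-submodules
`⊥ = c 0 ≤ c 1 ≤ ⋯ ≤ c p = ⊤` whose successive quotients are `R`-elementary; moreover,
for any such chain, `Ass(M)` is contained in the union of the associated primes of the
successive quotients. -/
theorem exists_elementary_filtration_and_rAss_subset
    (R S M : Type*) [CommRing R] [IsNoetherianRing R] [Ring S] [IsNoetherianRing S]
    [Algebra R S] [AddCommGroup M] [Module S M]
    (hM : Nontrivial M) (hfg : (⊤ : Submodule S M).FG) :
    (∃ (p : ℕ) (c : ℕ → Submodule S M), c 0 = ⊥ ∧ c p = ⊤ ∧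
        (∀ i < p, c i ≤ c (i + 1)) ∧
        ∀ i < p, IsRElem R (Submodule.map (c i).mkQ (c (i + 1)))) ∧
      ∀ (p : ℕ) (c : ℕ → Submodule S M), c 0 = ⊥ → c p = ⊤ →
        (∀ i < p, c i ≤ c (i + 1)) →
        (∀ i < p, IsRElem R (Submodule.map (c i).mkQ (c (i + 1)))) →
        RAssOf R (⊤ : Submodule S M) ⊆
          ⋃ i < p, RAssOf R (Submodule.map (c i).mkQ (c (i + 1))) :=
  exists_elementary_filtration_and_rAss_subset_general R S M hfg
end

section
/- Let R be a commutative noetherian ring, S a left noetherian ring which is an R-algebra, I and J ideals of R, and E an injective S-module. Then Γ_{I,J}(E) is an injective S-module. -/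
/-- `Γ_{I,J}` of a module. -/
def gammaIJ (R S : Type*) [CommRing R] [Ring S] [Algebra R S] (I J : Ideal R)
    (M : Type*) [AddCommGroup M] [Module S M] : Submodule S M :=
  sSup {N : Submodule S M | N.FG ∧ ∃ n, 1 ≤ n ∧ I ^ n ≤ annRS R N ⊔ J}

/-!
By Baer's criterion it suffices to solve the following correction problem: given `x ∈ E` with
`D • x ⊆ Γ_{I,J}(E)` for a left ideal `D` of `S` (such an `x` extends a map `D → Γ_{I,J}(E)` by
injectivity of `E`), find `y ∈ Γ_{I,J}(E)` with `d • y = d • x` for all `d ∈ D`. Since `D • x`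
is finitely generated, `I ⊆ √(Ann_R(D • x) + J)`. For each generator `a` of `Ann_R(D • x)` the
chain of annihilators of `aᵗ • x` stabilises, which makes `D • x` and `S • aᵗ • x` disjoint;
injectivity of `E` then replaces `x` by an element killed by a power of `a` without changing
`D • x`. After all generators have been treated, `Ann_R(D • x) ⊆ √Ann_R(S • y)`, hence
`I ⊆ √(Ann_R(S • y) + J)` and `y ∈ Γ_{I,J}(E)`.
-/

universe u

theorem Ideal.exists_pow_le_iff_le_radical {R : Type*} [CommRing R] {I K : Ideal R}
    (hI : I.FG) : (∃ n, 1 ≤ n ∧ I ^ n ≤ K) ↔ I ≤ K.radical := by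
  refine ⟨fun ⟨n, _, hn⟩ r hr => ⟨n, hn (Ideal.pow_mem_pow hr n)⟩, fun h => ?_⟩
  obtain ⟨k, hk⟩ := Ideal.exists_pow_le_of_le_radical_of_fg h hI
  exact ⟨k + 1, Nat.le_add_left 1 k, (Ideal.pow_le_pow_right k.le_succ).trans hk⟩

theorem Ideal.radical_inf_sup {R : Type*} [CommRing R] (A₁ A₂ J : Ideal R) :
    (A₁ ⊓ A₂ ⊔ J).radical = (A₁ ⊔ J).radical ⊓ (A₂ ⊔ J).radical := by
  refine le_antisymm (le_inf (Ideal.radical_mono (sup_le_sup_right inf_le_left J))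
    (Ideal.radical_mono (sup_le_sup_right inf_le_right J))) ?_
  rw [← Ideal.radical_mul]
  refine Ideal.radical_mono ?_
  simp only [Ideal.sup_mul, Ideal.mul_sup]
  exact sup_le (sup_le (le_sup_of_le_left Ideal.mul_le_inf) (le_sup_of_le_right Ideal.mul_le_left))
    (sup_le (le_sup_of_le_right Ideal.mul_le_right) (le_sup_of_le_right Ideal.mul_le_right))

theorem LinearPMap.exists_le_mem_domain_of_forall_smul_eq {R Y Q : Type*} [Ring R]
    [AddCommGroup Y] [Module R Y] [AddCommGroup Q] [Module R Q]
    (φ : Y →ₗ.[R] Q) (y : Y) (q : Q)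
    (h : ∀ (s : R) (hs : s • y ∈ φ.domain), s • q = φ ⟨s • y, hs⟩) :
    ∃ ψ : Y →ₗ.[R] Q, φ ≤ ψ ∧ y ∈ ψ.domain := by
  set G := φ.graph ⊔ Submodule.span R {(y, q)}
  have hG : ∀ z ∈ G, z.1 = 0 → z.2 = 0 := by
    intro z hz hz₁
    obtain ⟨w, hw, _, hsy, rfl⟩ := Submodule.mem_sup.mp hz
    obtain ⟨m, hm₁, hm₂⟩ := (φ.mem_graph_iff).mp hw
    obtain ⟨s, rfl⟩ := Submodule.mem_span_singleton.mp hsy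
    have hsm : s • y = -(m : Y) := by
      simp only [Prod.fst_add, Prod.smul_fst, ← hm₁] at hz₁
      exact eq_neg_of_add_eq_zero_right hz₁
    have hmem : s • y ∈ φ.domain := hsm ▸ φ.domain.neg_mem m.2
    have hsq : s • q = -φ m := by
      rw [h s hmem, ← φ.map_neg]
      exact congrArg φ (Subtype.ext hsm)
    simp only [Prod.snd_add, Prod.smul_snd, ← hm₂, hsq, add_neg_cancel]
  refine ⟨G.toLinearPMap, LinearPMap.le_of_le_graph ?_, ?_⟩
  · rw [Submodule.toLinearPMap_graph_eq G hG]; exact le_sup_left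
  · refine LinearPMap.mem_domain_of_mem_graph (y := q) ?_
    rw [Submodule.toLinearPMap_graph_eq G hG]
    exact Submodule.mem_sup_right (Submodule.mem_span_singleton_self _)

/-- A Baer criterion that, unlike `Module.Baer.of_injective`, needs no `Small` assumption on `R`:
only the ideal maps `s ↦ φ (s • y)` arising from modules in the universe of `Q` are tested. -/
theorem Module.injective_of_forall_exists_smul_eq {R : Type*} [Ring R] {Q : Type u}
    [AddCommGroup Q] [Module R Q]
    (h : ∀ (Y : Type u) [AddCommGroup Y] [Module R Y] (φ : Y →ₗ.[R] Q) (y : Y),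
      ∃ q : Q, ∀ (s : R) (hs : s • y ∈ φ.domain), s • q = φ ⟨s • y, hs⟩) :
    Module.Injective R Q where
  out X Y _ _ _ _ i hi f := by
    let φ₀ : Y →ₗ.[R] Q := ⟨LinearMap.range i, f ∘ₗ (LinearEquiv.ofInjective i hi).symm⟩
    obtain ⟨m, hφ₀m, hmax⟩ := zorn_le_nonempty₀ {φ | φ₀ ≤ φ}
      (fun c hc hchain φ hφ => ⟨LinearPMap.sSup c hchain.directedOn,
        (hc hφ).trans (LinearPMap.le_sSup _ hφ), fun _ => LinearPMap.le_sSup _⟩) φ₀ (le_refl φ₀)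
    have hdom (y : Y) : y ∈ m.domain := by
      obtain ⟨q, hq⟩ := h Y m y
      obtain ⟨ψ, hmψ, hy⟩ := m.exists_le_mem_domain_of_forall_smul_eq y q hq
      exact (hmax.2 (hmax.1.trans hmψ) hmψ).1 hy
    refine ⟨m.toFun ∘ₗ LinearMap.id.codRestrict m.domain hdom, fun x => ?_⟩
    have hm : φ₀ ⟨i x, x, rfl⟩ = m ⟨i x, hdom _⟩ := hφ₀m.2 rfl
    exact hm.symm.trans (congrArg f ((LinearEquiv.ofInjective i hi).symm_apply_apply x))

theorem Module.Injective.exists_extend_linearPMap {R : Type*} [Ring R] {Q : Type u}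
    [AddCommGroup Q] [Module R Q] (hQ : Module.Injective R Q) {Y : Type u} [AddCommGroup Y]
    [Module R Y] (φ : Y →ₗ.[R] Q) : ∃ g : Y →ₗ[R] Q, ∀ x : φ.domain, g x = φ x :=
  hQ.out φ.domain.subtype Subtype.val_injective φ.toFun

theorem Module.Injective.exists_extend_of_disjoint {R : Type*} [Ring R] {Q : Type u}
    [AddCommGroup Q] [Module R Q] (hQ : Module.Injective R Q) {M : Type u} [AddCommGroup M]
    [Module R M] {N₁ N₂ : Submodule R M} (h : Disjoint N₁ N₂) (f : N₁ →ₗ[R] Q) :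
    ∃ g : M →ₗ[R] Q, (∀ x : N₁, g x = f x) ∧ ∀ x ∈ N₂, g x = 0 := by
  have hinj : Function.Injective (N₂.mkQ ∘ₗ N₁.subtype) := by
    refine LinearMap.ker_eq_bot.mp (LinearMap.ker_eq_bot'.mpr fun x hx => Subtype.ext ?_)
    exact Submodule.disjoint_def.mp h x x.2 ((Submodule.Quotient.mk_eq_zero N₂).mp hx)
  obtain ⟨g, hg⟩ := hQ.out _ hinj f
  exact ⟨g ∘ₗ N₂.mkQ, hg, fun x hx => by
    rw [LinearMap.comp_apply, Submodule.mkQ_apply, (Submodule.Quotient.mk_eq_zero N₂).mpr hx,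
      map_zero]⟩

section annRS

variable {R S E : Type*} [CommRing R] [Ring S] [Algebra R S] [AddCommGroup E] [Module S E]

theorem annRS_anti_s13 : Antitone (annRS R : Submodule S E → Ideal R) :=
  fun _ _ h _ hr x hx => hr x (h hx)

theorem annRS_bot : annRS R (⊥ : Submodule S E) = ⊤ :=
  eq_top_iff.mpr fun r _ x hx => by rw [(Submodule.mem_bot S).mp hx, smul_zero]

theorem annRS_sup (N₁ N₂ : Submodule S E) : annRS R (N₁ ⊔ N₂) = annRS R N₁ ⊓ annRS R N₂ := by
  refine le_antisymm (le_inf (annRS_anti_s13 le_sup_left) (annRS_anti_s13 le_sup_right)) ?_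
  rintro r ⟨hr₁, hr₂⟩ x hx
  obtain ⟨x₁, hx₁, x₂, hx₂, rfl⟩ := Submodule.mem_sup.mp hx
  rw [smul_add, hr₁ x₁ hx₁, hr₂ x₂ hx₂, add_zero]

theorem mem_annRS_span_singleton {r : R} {y : E} :
    r ∈ annRS R (Submodule.span S {y}) ↔ algebraMap R S r • y = 0 := by
  refine ⟨fun hr => hr y (Submodule.mem_span_singleton_self y), fun hr z hz => ?_⟩
  obtain ⟨s, rfl⟩ := Submodule.mem_span_singleton.mp hz
  rw [smul_smul, Algebra.commutes, mul_smul, hr, smul_zero]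

end annRS

section gammaIJ

variable {R S E : Type*} [CommRing R] [Ring S] [Algebra R S] [AddCommGroup E] [Module S E]
  {I J : Ideal R}

theorem directedOn_fg_le_radical_annRS_sup : DirectedOn (· ≤ ·)
    {N : Submodule S E | N.FG ∧ I ≤ (annRS R N ⊔ J).radical} := by
  rintro N₁ ⟨hN₁, hI₁⟩ N₂ ⟨hN₂, hI₂⟩
  refine ⟨N₁ ⊔ N₂, ⟨hN₁.sup hN₂, ?_⟩, le_sup_left, le_sup_right⟩
  rw [annRS_sup, Ideal.radical_inf_sup]
  exact le_inf hI₁ hI₂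

variable [IsNoetherianRing R]

theorem gammaIJ_eq_sSup_le_radical : gammaIJ R S I J E =
    sSup {N : Submodule S E | N.FG ∧ I ≤ (annRS R N ⊔ J).radical} := by
  simp only [gammaIJ, Ideal.exists_pow_le_iff_le_radical (IsNoetherian.noetherian I)]

theorem le_radical_annRS_sup_of_fg_of_le_gammaIJ {N : Submodule S E} (hN : N.FG)
    (hle : N ≤ gammaIJ R S I J E) : I ≤ (annRS R N ⊔ J).radical := by
  rw [gammaIJ_eq_sSup_le_radical] at hle
  have hbot : (⊥ : Submodule S E) ∈ {N : Submodule S E | N.FG ∧ I ≤ (annRS R N ⊔ J).radical} :=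
    ⟨Submodule.fg_bot, by simp [annRS_bot, Ideal.radical_top]⟩
  obtain ⟨M, ⟨-, hM⟩, hNM⟩ :=
    (CompleteLattice.isCompactElement_iff_le_of_directed_sSup_le _ N).mp
      ((Submodule.fg_iff_compact N).mp hN) _ ⟨⊥, hbot⟩ directedOn_fg_le_radical_annRS_sup hle
  exact hM.trans (Ideal.radical_mono (sup_le_sup_right (annRS_anti_s13 hNM) J))

theorem mem_gammaIJ_of_le_radical {x : E}
    (h : I ≤ (annRS R (Submodule.span S {x}) ⊔ J).radical) : x ∈ gammaIJ R S I J E := by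
  rw [gammaIJ_eq_sSup_le_radical]
  have hx : Submodule.span S {x} ∈
      {N : Submodule S E | N.FG ∧ I ≤ (annRS R N ⊔ J).radical} :=
    ⟨Submodule.fg_span_singleton x, h⟩
  exact le_sSup hx (Submodule.mem_span_singleton_self x)

end gammaIJ

section fitting

variable {S : Type*} [Ring S] {E : Type*} [AddCommGroup E] [Module S E]

theorem Commute.smul_smul_comm {a b : S} (h : Commute a b) (m : E) : a • b • m = b • a • m := by
  rw [smul_smul, h.eq, ← smul_smul]

variable [IsNoetherianRing S]

theorem exists_pow_smul_eq_zero_of_pow_succ_smul_eq_zero {α : S} (hα : ∀ s, Commute α s)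
    (x : E) : ∃ t : ℕ, ∀ s : S, α ^ (t + 1) • s • x = 0 → α ^ t • s • x = 0 := by
  have hker (t : ℕ) (s : S) :
      s ∈ LinearMap.ker (LinearMap.toSpanSingleton S E (α ^ t • x)) ↔ α ^ t • s • x = 0 := by
    rw [LinearMap.mem_ker, LinearMap.toSpanSingleton_apply, ((hα s).pow_left t).smul_smul_comm]
  let L : ℕ →o Submodule S S :=
    ⟨fun t => LinearMap.ker (LinearMap.toSpanSingleton S E (α ^ t • x)),
      monotone_nat_of_le_succ fun t s hs => by
        rw [hker] at hs ⊢
        rw [pow_succ', mul_smul, hs, smul_zero]⟩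
  obtain ⟨n, hn⟩ := monotone_stabilizes_iff_noetherian.mpr inferInstance L
  refine ⟨n, fun s hs => ?_⟩
  rw [← hker] at hs ⊢
  have hL : L (n + 1) ≤ L n := (hn (n + 1) n.le_succ).ge
  exact hL hs

end fitting

section main

variable {R S : Type*} [CommRing R] [Ring S] [Algebra R S] [IsNoetherianRing S]
  {E : Type u} [AddCommGroup E] [Module S E]

theorem exists_smul_eq_and_pow_smul_eq_zero (hE : Module.Injective S E) {α : S}
    (hα : ∀ s, Commute α s) (D : Submodule S S) (x : E) (hD : ∀ d ∈ D, α • d • x = 0) :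
    ∃ y : E, (∀ d ∈ D, d • y = d • x) ∧ ∃ t, α ^ t • y = 0 := by
  obtain ⟨t, ht⟩ := exists_pow_smul_eq_zero_of_pow_succ_smul_eq_zero hα x
  have hdisj :
      Disjoint (D.map (LinearMap.toSpanSingleton S E x)) (Submodule.span S {α ^ t • x}) := by
    refine Submodule.disjoint_def.mpr ?_
    rintro _ ⟨d, hd, rfl⟩ hm
    obtain ⟨s, hs⟩ := Submodule.mem_span_singleton.mp hm
    rw [LinearMap.toSpanSingleton_apply] at hs ⊢
    have hsx : α ^ t • s • x = 0 := ht s <| by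
      rw [pow_succ', mul_smul, ((hα s).pow_left t).smul_smul_comm, hs]
      exact hD d hd
    rw [← hs, ← ((hα s).pow_left t).smul_smul_comm, hsx]
  obtain ⟨g, hg, hg₀⟩ := hE.exists_extend_of_disjoint hdisj (Submodule.subtype _)
  refine ⟨g x, fun d hd => ?_, t, ?_⟩
  · rw [← map_smul]
    exact hg ⟨d • x, d, hd, rfl⟩
  · rw [← map_smul]
    exact hg₀ _ (Submodule.mem_span_singleton_self _)

theorem exists_smul_eq_and_subset_radical_annRS (hE : Module.Injective S E) (s : Finset R)
    (D : Submodule S S) (x : E) (hs : ∀ a ∈ s, ∀ d ∈ D, algebraMap R S a • d • x = 0) :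
    ∃ y : E, (∀ d ∈ D, d • y = d • x) ∧
      (s : Set R) ⊆ (annRS R (Submodule.span S {y})).radical := by
  classical
  induction s using Finset.induction_on generalizing D x with
  | empty => exact ⟨x, fun _ _ => rfl, by simp⟩
  | insert a s _ ih =>
    obtain ⟨y₁, hy₁, t, ht⟩ := exists_smul_eq_and_pow_smul_eq_zero hE
      (Algebra.commute_algebraMap_left a) D x (hs a (Finset.mem_insert_self a s))
    obtain ⟨y, hy, hsy⟩ := ih (D ⊔ LinearMap.ker (LinearMap.toSpanSingleton S E y₁)) y₁ <| by
      intro b hb _ hd'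
      obtain ⟨d, hd, k, hk, rfl⟩ := Submodule.mem_sup.mp hd'
      rw [LinearMap.mem_ker, LinearMap.toSpanSingleton_apply] at hk
      rw [add_smul, hy₁ d hd, hk, add_zero]
      exact hs b (Finset.mem_insert_of_mem hb) d hd
    have hpow : algebraMap R S a ^ t • y = 0 := by
      rw [hy _ (Submodule.mem_sup_right (by simpa using ht)), ht]
    refine ⟨y, fun d hd => (hy d (Submodule.mem_sup_left hd)).trans (hy₁ d hd), ?_⟩
    rw [Finset.coe_insert, Set.insert_subset_iff]
    exact ⟨⟨t, mem_annRS_span_singleton.mpr (by rw [map_pow]; exact hpow)⟩, hsy⟩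

variable [IsNoetherianRing R] {I J : Ideal R}

theorem exists_mem_gammaIJ_smul_eq (hE : Module.Injective S E) (D : Submodule S S) (x : E)
    (hDx : ∀ d ∈ D, d • x ∈ gammaIJ R S I J E) :
    ∃ y ∈ gammaIJ R S I J E, ∀ d ∈ D, d • y = d • x := by
  set N := D.map (LinearMap.toSpanSingleton S E x)
  have hI : I ≤ (annRS R N ⊔ J).radical :=
    le_radical_annRS_sup_of_fg_of_le_gammaIJ ((IsNoetherian.noetherian D).map _)
      (by rintro _ ⟨d, hd, rfl⟩; exact hDx d hd)
  obtain ⟨s, hs⟩ := IsNoetherian.noetherian (annRS R N)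
  obtain ⟨y, hy, hsy⟩ := exists_smul_eq_and_subset_radical_annRS hE s D x
    fun a ha d hd => (hs ▸ Ideal.subset_span ha : a ∈ annRS R N) _ ⟨d, hd, rfl⟩
  have hN : annRS R N ≤ (annRS R (Submodule.span S {y})).radical := hs ▸ Ideal.span_le.mpr hsy
  refine ⟨y, mem_gammaIJ_of_le_radical (hI.trans ?_), hy⟩
  rw [Ideal.radical_le_radical_iff]
  exact sup_le (hN.trans (Ideal.radical_mono le_sup_left)) (le_sup_right.trans Ideal.le_radical)

theorem exists_smul_eq_of_linearPMap_gammaIJ (hE : Module.Injective S E) {Y : Type u}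
    [AddCommGroup Y] [Module S Y] (φ : Y →ₗ.[S] gammaIJ R S I J E) (y : Y) :
    ∃ q, ∀ (s : S) (hs : s • y ∈ φ.domain), s • q = φ ⟨s • y, hs⟩ := by
  obtain ⟨g, hg⟩ := hE.exists_extend_linearPMap ⟨φ.domain, (gammaIJ R S I J E).subtype ∘ₗ φ.toFun⟩
  have hgy (s : S) (hs : s • y ∈ φ.domain) : s • g y = φ ⟨s • y, hs⟩ := by
    rw [← map_smul]
    exact hg ⟨s • y, hs⟩
  obtain ⟨q, hq, hqy⟩ := exists_mem_gammaIJ_smul_eq hE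
    (φ.domain.comap (LinearMap.toSpanSingleton S Y y)) (g y) fun s hs => hgy s hs ▸ (φ _).2
  exact ⟨⟨q, hq⟩, fun s hs => Subtype.ext ((hqy s hs).trans (hgy s hs))⟩

end main

/-- If `E` is an injective `S`-module, `R` is commutative noetherian and `S` is a left
noetherian `R`-algebra, then `Γ_{I,J}(E)` is again an injective `S`-module. -/
theorem gammaIJ_injective_of_injective
    (R S E : Type*) [CommRing R] [IsNoetherianRing R] [Ring S] [IsNoetherianRing S]
    [Algebra R S] [AddCommGroup E] [Module S E] (I J : Ideal R)
    (hE : Module.Injective S E) :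
    Module.Injective S ↥(gammaIJ R S I J E) :=
  Module.injective_of_forall_exists_smul_eq fun _ _ _ φ y =>
    exists_smul_eq_of_linearPMap_gammaIJ hE φ y
end

section
/- Let R be a commutative noetherian ring, S a left noetherian ring which is an R-algebra, and I, J ideals of R. Let M be an (I,J)-torsion S-module and let E be an injective S-module containing M as an essential S-submodule (i.e., E is an injective hull of M). Then E is (I,J)-torsion, i.e., Γ_{I,J}(E) = E. -/
section Aux

variable {R S E : Type*} [CommRing R] [Ring S] [Algebra R S]
  [AddCommGroup E] [Module S E]

/-- Central elements of `S` coming from `R` commute with the `S`-action. -/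
lemma algSmul_comm (a : R) (s : S) (x : E) :
    algebraMap R S a • s • x = s • algebraMap R S a • x := by
  rw [← mul_smul, ← mul_smul, Algebra.commutes]

/-- The `S`-linear endomorphism of `E` given by the action of `algebraMap R S a`. -/
def algSmul (a : R) : E →ₗ[S] E where
  toFun e := algebraMap R S a • e
  map_add' e₁ e₂ := smul_add _ _ _
  map_smul' s e := algSmul_comm a s e

lemma mem_annRS_span {a : R} {x : E} (h : algebraMap R S a • x = 0) :
    a ∈ annRS R (Submodule.span S ({x} : Set E)) := by
  intro w hw
  have hle : Submodule.span S ({x} : Set E) ≤ LinearMap.ker (algSmul (S := S) (E := E) a) := by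
    rw [Submodule.span_le]
    intro e he
    rcases Set.mem_singleton_iff.mp he with rfl
    simpa [algSmul, LinearMap.mem_ker] using h
  simpa [algSmul, LinearMap.mem_ker] using hle hw

/-- Product of two "`r`-power minus `J`-element" elements is again such. -/
lemma key_mul {J : Ideal R} {r j j' : R} (hj : j ∈ J) (hj' : j' ∈ J) (m n : ℕ) :
    ∃ j₂ ∈ J, (r ^ m - j') * (r ^ n - j) = r ^ (m + n) - j₂ := by
  refine ⟨r ^ m * j + j' * r ^ n - j' * j,
    J.sub_mem (J.add_mem (J.mul_mem_left _ hj) (J.mul_mem_right _ hj'))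
      (J.mul_mem_left _ hj), by ring⟩

/-- The defining family of `gammaIJ` is directed. -/
lemma gamma_directed (I J : Ideal R) :
    DirectedOn (· ≤ ·)
      {N : Submodule S E | N.FG ∧ ∃ n, 1 ≤ n ∧ I ^ n ≤ annRS R N ⊔ J} := by
  rintro N₁ ⟨hfg₁, n₁, hn₁, hle₁⟩ N₂ ⟨hfg₂, n₂, hn₂, hle₂⟩
  refine ⟨N₁ ⊔ N₂, ⟨hfg₁.sup hfg₂, n₁ + n₂, le_trans hn₁ (Nat.le_add_right _ _), ?_⟩,
    le_sup_left, le_sup_right⟩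
  rw [pow_add]
  refine Ideal.mul_le.2 fun a ha b hb => ?_
  obtain ⟨a₁, ha₁, ja, hja, rfl⟩ := Submodule.mem_sup.1 (hle₁ ha)
  obtain ⟨a₂, ha₂, jb, hjb, rfl⟩ := Submodule.mem_sup.1 (hle₂ hb)
  have hann : a₁ * a₂ ∈ annRS R (N₁ ⊔ N₂) := by
    intro w hw
    obtain ⟨w₁, hw₁, w₂, hw₂, rfl⟩ := Submodule.mem_sup.1 hw
    rw [smul_add]
    have h1 : algebraMap R S (a₁ * a₂) • w₁ = 0 := by
      rw [mul_comm, map_mul, mul_smul, ha₁ w₁ hw₁, smul_zero]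
    have h2 : algebraMap R S (a₁ * a₂) • w₂ = 0 := by
      rw [map_mul, mul_smul, ha₂ w₂ hw₂, smul_zero]
    rw [h1, h2, add_zero]
  have hJ : (a₁ + ja) * (a₂ + jb) - a₁ * a₂ ∈ J := by
    have : (a₁ + ja) * (a₂ + jb) - a₁ * a₂ = a₁ * jb + ja * (a₂ + jb) := by ring
    rw [this]
    exact J.add_mem (J.mul_mem_left _ hjb) (J.mul_mem_right _ hja)
  have : (a₁ + ja) * (a₂ + jb) = a₁ * a₂ + ((a₁ + ja) * (a₂ + jb) - a₁ * a₂) := by ring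
  rw [this]
  exact Submodule.add_mem_sup hann hJ

/-- Elementwise extraction from `gammaIJ = ⊤`. -/
lemma exists_torsion_of_gamma_top {I J : Ideal R} (h : gammaIJ R S I J E = ⊤)
    {r : R} (hr : r ∈ I) (x : E) :
    ∃ n j, 1 ≤ n ∧ j ∈ J ∧ algebraMap R S (r ^ n - j) • x = 0 := by
  have hx : x ∈ gammaIJ R S I J E := h ▸ Submodule.mem_top
  have hne : Set.Nonempty {N : Submodule S E | N.FG ∧ ∃ n, 1 ≤ n ∧ I ^ n ≤ annRS R N ⊔ J} := by
    refine ⟨⊥, Submodule.fg_bot, 1, le_refl 1, ?_⟩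
    intro a _
    refine Submodule.mem_sup_left (fun w hw => ?_)
    rw [(Submodule.mem_bot S).1 hw, smul_zero]
  obtain ⟨N, ⟨_, n, hn1, hle⟩, hxN⟩ :=
    (Submodule.mem_sSup_of_directed hne (gamma_directed I J)).1 hx
  obtain ⟨a, ha, j, hj, haj⟩ := Submodule.mem_sup.1 (hle (Ideal.pow_mem_pow hr n))
  refine ⟨n, j, hn1, hj, ?_⟩
  have : r ^ n - j = a := by rw [← haj]; ring
  rw [this]
  exact ha x hxN

end Aux

/-- If `M` is an `(I,J)`-torsion `S`-module and `E` is an injective `S`-module containing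
`M` as an essential `S`-submodule (an injective hull of `M`), then `E` is `(I,J)`-torsion. -/
theorem injective_hull_of_torsion_is_torsion
    (R S E : Type*) [CommRing R] [IsNoetherianRing R] [Ring S] [IsNoetherianRing S]
    [Algebra R S] [AddCommGroup E] [Module S E] (I J : Ideal R)
    (hE : Module.Injective S E) (M : Submodule S E)
    (hM : gammaIJ R S I J ↥M = ⊤)
    (hess : ∀ N' : Submodule S E, N' ≠ ⊥ → M ⊓ N' ≠ ⊥) :
    gammaIJ R S I J E = ⊤ := by
  classical
  -- elementwise torsion of elements of M
  have hMtor : ∀ m : E, m ∈ M → ∀ {r : R}, r ∈ I →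
      ∃ n j, 1 ≤ n ∧ j ∈ J ∧ algebraMap R S (r ^ n - j) • m = 0 := by
    intro m hm r hr
    obtain ⟨n, j, hn, hj, h0⟩ := exists_torsion_of_gamma_top hM hr (⟨m, hm⟩ : M)
    refine ⟨n, j, hn, hj, ?_⟩
    have := congrArg (Subtype.val) h0
    simpa using this
  -- main elementwise claim for E
  have htor : ∀ (x : E) {r : R}, r ∈ I →
      ∃ n j, 1 ≤ n ∧ j ∈ J ∧ algebraMap R S (r ^ n - j) • x = 0 := by
    intro x r hr
    set f : R → Submodule S S :=
      fun v => LinearMap.ker (LinearMap.toSpanSingleton S E (algebraMap R S v • x)) with hf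
    set F : Set (Submodule S S) := {L | ∃ (n : ℕ) (j : R), j ∈ J ∧ L = f (r ^ n - j)} with hF
    have hFne : F.Nonempty := ⟨f (r ^ 0 - 0), 0, 0, J.zero_mem, rfl⟩
    have hNoeth : IsNoetherian S S := inferInstance
    obtain ⟨L0, hL0F, hmax⟩ := (set_has_maximal_iff_noetherian.2 hNoeth) F hFne
    obtain ⟨n0, j0, hj0, hL0⟩ := hL0F
    set v0 : R := r ^ n0 - j0 with hv0
    set y : E := algebraMap R S v0 • x with hy
    by_cases hyt : ∃ m j', 1 ≤ m ∧ j' ∈ J ∧ algebraMap R S (r ^ m - j') • y = 0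
    · obtain ⟨m, j', hm, hj', h0⟩ := hyt
      obtain ⟨j₂, hj₂, hmul⟩ := key_mul hj0 hj' m n0
      refine ⟨m + n0, j₂, le_trans hm (Nat.le_add_right _ _), hj₂, ?_⟩
      rw [← hmul, map_mul, mul_smul]
      exact h0
    · exfalso
      have hy0 : y ≠ 0 := by
        intro h
        exact hyt ⟨1, 0, le_refl 1, J.zero_mem, by rw [h, smul_zero]⟩
      have hsp : Submodule.span S ({y} : Set E) ≠ ⊥ := by
        simpa [Submodule.span_singleton_eq_bot] using hy0
      obtain ⟨z, hz, hz0⟩ := (Submodule.ne_bot_iff _).1 (hess _ hsp)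
      obtain ⟨hzM, hzy⟩ := Submodule.mem_inf.1 hz
      obtain ⟨s, hs⟩ := Submodule.mem_span_singleton.1 hzy
      obtain ⟨m, j', hm, hj', hzt⟩ := hMtor z hzM hr
      obtain ⟨j₂, hj₂, hmul⟩ := key_mul hj0 hj' m n0
      -- s lies in the kernel for the product
      have hsk : s ∈ f ((r ^ m - j') * v0) := by
        rw [hf]
        simp only [LinearMap.mem_ker, LinearMap.toSpanSingleton_apply]
        rw [map_mul, mul_smul, ← hy, ← algSmul_comm, hs, hzt]
      -- that kernel lies in F and contains L0
      have hle : L0 ≤ f ((r ^ m - j') * v0) := by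
        intro u hu
        rw [hL0, hf] at hu
        simp only [LinearMap.mem_ker, LinearMap.toSpanSingleton_apply] at hu
        rw [hf]
        simp only [LinearMap.mem_ker, LinearMap.toSpanSingleton_apply]
        rw [map_mul, mul_smul, ← hy, ← algSmul_comm, hu, smul_zero]
      have hFmem : f ((r ^ m - j') * v0) ∈ F := ⟨m + n0, j₂, hj₂, by rw [hmul]⟩
      have heq : f ((r ^ m - j') * v0) = L0 := by
        by_contra hne
        exact hmax _ hFmem (lt_of_le_of_ne hle (Ne.symm hne))
      have hsy : s • y = 0 := by
        have : s ∈ L0 := heq ▸ hsk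
        rw [hL0, hf] at this
        simp only [LinearMap.mem_ker, LinearMap.toSpanSingleton_apply] at this
        rw [hy]
        exact this
      exact hz0 (by rw [← hs, hsy])
  -- conclude via radical and noetherianity of R
  rw [eq_top_iff]
  intro x _
  set A : Ideal R := annRS R (Submodule.span S ({x} : Set E)) with hA
  have hrad : I ≤ (A ⊔ J).radical := by
    intro r hr
    obtain ⟨n, j, hn, hj, h0⟩ := htor x hr
    refine Ideal.mem_radical_iff.2 ⟨n, ?_⟩
    have ha : r ^ n - j ∈ A := mem_annRS_span h0
    have : r ^ n = (r ^ n - j) + j := by ring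
    rw [this]
    exact Submodule.add_mem_sup ha hj
  obtain ⟨n, hn⟩ := Ideal.exists_pow_le_of_le_radical_of_fg hrad (IsNoetherian.noetherian I)
  have hmem : Submodule.span S ({x} : Set E) ∈
      {N : Submodule S E | N.FG ∧ ∃ n, 1 ≤ n ∧ I ^ n ≤ annRS R N ⊔ J} := by
    refine ⟨Submodule.fg_span_singleton x, n + 1, Nat.le_add_left 1 n, ?_⟩
    exact le_trans (Ideal.pow_le_pow_right (Nat.le_succ n)) hn
  exact le_sSup hmem (Submodule.mem_span_singleton_self x)
end
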